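/- arXiv:1311.7333 — 5 statements merged into one kernel-verified Lean document; each statement's English description precedes it below -/
import Mathlib

section
/- Theorem 1 (ROC curve determined by the logistic model on standardized markers). Let U : Ω → [0,1] be a random variable whose conditional distribution given D = 0 is the uniform distribution on [0,1], and let G : [0,1] → ℝ be a measurable function such that E[D | σ(U)] = expit(logit ρ + G(U)) almost surely. Then for every t ∈ [0,1], P(U ≤ t | D = 1) = ∫₀ᵗ exp(G(u)) du; in particular ∫₀¹ exp(G(u)) du = 1. Moreover, if G is continuous, then the case conditional CDF ROC(t) := P(U ≤ t | D = 1) is differentiable on (0,1) with derivative ROC′(t) = exp(G(t)), i.e., G(t) = log ROC′(t). -/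
open MeasureTheory Real Set

/-- The expit (inverse logit) function. -/
noncomputable def expit (x : ℝ) : ℝ := Real.exp x / (1 + Real.exp x)

/-- The logit function. -/
noncomputable def logit (p : ℝ) : ℝ := Real.log (p / (1 - p))

/-! The logistic model makes the likelihood ratio of the marker exponential in the score.
Conditioning on `σ(U)`, the laws of `U` on `D` and on `Dᶜ` have densities `expit (logit ρ + G)`
and `1 - expit (logit ρ + G)` with respect to the law of `U`, so the case law is the control law
with density `exp (logit ρ + G) = ρ / (1 - ρ) * exp G`. The control law is `(1 - ρ)` times
Lebesgue measure on `[0,1]`, hence the case law is `ρ * exp G` times Lebesgue measure on `[0,1]`;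
dividing by `ρ` gives the ROC curve, and the fundamental theorem of calculus its derivative. -/

theorem expit_pos (x : ℝ) : 0 < expit x := by unfold expit; positivity

theorem expit_lt_one (x : ℝ) : expit x < 1 := by
  rw [expit, div_lt_one (by positivity)]
  linarith

theorem expit_eq_one_sub_expit_mul_exp (x : ℝ) : expit x = (1 - expit x) * exp x := by
  have : 1 + exp x ≠ 0 := by positivity
  unfold expit
  field_simp
  ring

theorem continuous_expit : Continuous expit :=
  continuous_exp.div (continuous_const.add continuous_exp) fun x => by positivity

theorem exp_logit {p : ℝ} (h0 : 0 < p) (h1 : p < 1) : exp (logit p) = p / (1 - p) :=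
  exp_log (div_pos h0 (sub_pos.2 h1))

section ConditionalLaw

variable {Ω β : Type*} [MeasurableSpace Ω] [mβ : MeasurableSpace β] {μ : Measure Ω}
  [IsFiniteMeasure μ] {D : Set Ω} {U : Ω → β} {g : β → ℝ}

theorem condExp_indicator_compl_ae_eq (hU : Measurable U) (hD : MeasurableSet D) :
    μ[Dᶜ.indicator (fun _ => (1 : ℝ)) | MeasurableSpace.comap U mβ]
      =ᵐ[μ] fun ω => 1 - μ[D.indicator (fun _ => (1 : ℝ)) | MeasurableSpace.comap U mβ] ω := by
  have hInd : Integrable (D.indicator fun _ => (1 : ℝ)) μ := (integrable_const 1).indicator hD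
  rw [indicator_compl]
  filter_upwards [condExp_sub (integrable_const _) hInd (MeasurableSpace.comap U mβ)] with ω hω
  rw [hω, Pi.sub_apply, condExp_const hU.comap_le]

theorem map_restrict_eq_withDensity_of_condExp_indicator (hU : Measurable U)
    (hD : MeasurableSet D) (hg : Measurable g) (hg0 : 0 ≤ g)
    (h : μ[D.indicator (fun _ => (1 : ℝ)) | MeasurableSpace.comap U mβ] =ᵐ[μ] fun ω => g (U ω)) :
    (μ.restrict D).map U = (μ.map U).withDensity fun b => ENNReal.ofReal (g b) := by
  ext s hs
  have hgU : Integrable (fun ω => g (U ω)) μ := integrable_condExp.congr h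
  rw [Measure.map_apply hU hs, Measure.restrict_apply (hU hs), withDensity_apply _ hs,
    setLIntegral_map hs hg.ennreal_ofReal hU,
    ← ofReal_integral_eq_lintegral_ofReal hgU.integrableOn (ae_of_all _ fun ω => hg0 _),
    ← setIntegral_congr_ae (hU hs) (h.mono fun ω hω _ => hω),
    setIntegral_condExp hU.comap_le ((integrable_const 1).indicator hD) ⟨s, hs, rfl⟩,
    integral_indicator_const _ hD, smul_eq_mul, mul_one, measureReal_restrict_apply hD,
    ofReal_measureReal, inter_comm]

theorem map_restrict_eq_withDensity_exp_of_condExp_eq_expit (hU : Measurable U)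
    (hD : MeasurableSet D) {G : β → ℝ} (hG : Measurable G) (c : ℝ)
    (h : μ[D.indicator (fun _ => (1 : ℝ)) | MeasurableSpace.comap U mβ]
      =ᵐ[μ] fun ω => expit (c + G (U ω))) :
    (μ.restrict D).map U
      = ((μ.restrict Dᶜ).map U).withDensity fun b => ENNReal.ofReal (exp (c + G b)) := by
  have hg : Measurable fun b => expit (c + G b) :=
    continuous_expit.measurable.comp (measurable_const.add hG)
  have hcompl : μ[Dᶜ.indicator (fun _ => (1 : ℝ)) | MeasurableSpace.comap U mβ]
      =ᵐ[μ] fun ω => 1 - expit (c + G (U ω)) :=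
    (condExp_indicator_compl_ae_eq hU hD).trans (h.mono fun ω hω => by simp only [hω])
  have hg' : Measurable fun b => 1 - expit (c + G b) := measurable_const.sub hg
  have hexp : Measurable fun b => exp (c + G b) := (measurable_const.add hG).exp
  rw [map_restrict_eq_withDensity_of_condExp_indicator hU hD hg (fun b => (expit_pos _).le) h,
    map_restrict_eq_withDensity_of_condExp_indicator hU hD.compl hg'
      (fun b => sub_nonneg.2 (expit_lt_one _).le) hcompl,
    ← withDensity_mul _ hg'.ennreal_ofReal hexp.ennreal_ofReal]
  congr 1
  funext b
  rw [Pi.mul_apply, ← ENNReal.ofReal_mul (sub_nonneg.2 (expit_lt_one _).le),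
    ← expit_eq_one_sub_expit_mul_exp]

end ConditionalLaw

theorem Set.Iic_inter_Icc_of_le {α : Type*} [Preorder α] {a b t : α} (ht : t ≤ b) :
    Iic t ∩ Icc a b = Icc a t := by
  ext u
  exact ⟨fun h => ⟨h.2.1, h.1⟩, fun h => ⟨h.2, h.1, h.2.trans ht⟩⟩

theorem eq_smul_volume_restrict_Icc_of_measure_Iic {κ : Measure ℝ} [IsFiniteMeasure κ]
    (hsupp : κ (Icc 0 1)ᶜ = 0) (h : ∀ t ∈ Icc (0 : ℝ) 1, κ (Iic t) = ENNReal.ofReal t * κ univ) :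
    κ = κ univ • volume.restrict (Icc 0 1) := by
  refine Measure.ext_of_Iic _ _ fun t => ?_
  rw [Measure.smul_apply, Measure.restrict_apply measurableSet_Iic, smul_eq_mul]
  rcases lt_or_ge t 0 with ht0 | ht0
  · have hempty : Iic t ∩ Icc 0 1 = ∅ :=
      eq_empty_of_forall_notMem fun u hu => (hu.1.trans_lt ht0).not_ge hu.2.1
    rw [hempty, measure_empty, mul_zero]
    exact measure_mono_null (Iic_subset_Iic.2 ht0.le) (by simpa using h 0 ⟨le_rfl, zero_le_one⟩)
  rcases le_or_gt t 1 with ht1 | ht1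
  · rw [h t ⟨ht0, ht1⟩, Iic_inter_Icc_of_le ht1, volume_Icc, sub_zero, mul_comm]
  · rw [inter_eq_right.2 (Icc_subset_Iic_self.trans (Iic_subset_Iic.2 ht1.le)), volume_Icc,
      sub_zero, ENNReal.ofReal_one, mul_one]
    exact measure_congr (ae_eq_univ.2 (measure_mono_null
      (compl_subset_compl.2 (Icc_subset_Iic_self.trans (Iic_subset_Iic.2 ht1.le))) hsupp))

theorem map_restrict_eq_smul_volume_restrict_Icc {Ω : Type*} [MeasurableSpace Ω]
    {μ : Measure Ω} [IsFiniteMeasure μ] {E : Set Ω} {U : Ω → ℝ} (hU : Measurable U)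
    (hUrange : ∀ ω, U ω ∈ Icc (0 : ℝ) 1)
    (hUnif : ∀ t ∈ Icc (0 : ℝ) 1, (μ ({ω | U ω ≤ t} ∩ E)).toReal = t * (μ E).toReal) :
    (μ.restrict E).map U = μ E • volume.restrict (Icc 0 1) := by
  have hsupp : (μ.restrict E).map U (Icc 0 1)ᶜ = 0 := by
    rw [Measure.map_apply hU measurableSet_Icc.compl]
    exact measure_mono_null (fun ω hω => (hω (hUrange ω)).elim) measure_empty
  have hcdf (t : ℝ) (ht : t ∈ Icc (0 : ℝ) 1) :
      (μ.restrict E).map U (Iic t) = ENNReal.ofReal t * (μ.restrict E).map U univ := by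
    rw [Measure.map_apply hU measurableSet_Iic, Measure.map_apply hU MeasurableSet.univ,
      Measure.restrict_apply (hU measurableSet_Iic), preimage_univ,
      Measure.restrict_apply MeasurableSet.univ, univ_inter, ← ENNReal.toReal_eq_toReal_iff'
        (measure_ne_top _ _) (ENNReal.mul_ne_top ENNReal.ofReal_ne_top (measure_ne_top _ _)),
      ENNReal.toReal_mul, ENNReal.toReal_ofReal ht.1]
    exact hUnif t ht
  have h := eq_smul_volume_restrict_Icc_of_measure_Iic hsupp hcdf
  rwa [Measure.map_apply hU MeasurableSet.univ, preimage_univ,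
    Measure.restrict_apply MeasurableSet.univ, univ_inter] at h

theorem toReal_withDensity_volume_restrict_Icc_Iic {a b t : ℝ} {f : ℝ → ℝ} (hf : Measurable f)
    (hf0 : 0 ≤ f) (ht : t ∈ Icc a b) :
    (((volume.restrict (Icc a b)).withDensity fun u => ENNReal.ofReal (f u)) (Iic t)).toReal
      = ∫ u in a..t, f u := by
  rw [withDensity_apply _ measurableSet_Iic, Measure.restrict_restrict measurableSet_Iic,
    Iic_inter_Icc_of_le ht.2, intervalIntegral.integral_of_le ht.1,
    ← integral_Icc_eq_integral_Ioc,
    integral_eq_lintegral_of_nonneg_ae (ae_of_all _ hf0) hf.aestronglyMeasurable]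

/-- Theorem 1: under the logistic regression model on the standardized marker `U`
(whose control distribution is uniform on `[0,1]`), the case conditional CDF of `U`
(the ROC curve) equals `∫₀ᵗ exp(G u) du`; in particular `∫₀¹ exp(G u) du = 1`, and if `G`
is continuous the ROC curve is differentiable on `(0,1)` with derivative `exp (G t)`,
i.e. `G t = log ROC'(t)`. -/
theorem roc_determined_by_logistic_model
    {Ω : Type*} [MeasurableSpace Ω] (μ : Measure Ω) [IsProbabilityMeasure μ]
    (D : Set Ω) (hD : MeasurableSet D)
    (hρ0 : 0 < (μ D).toReal) (hρ1 : (μ D).toReal < 1)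
    (U : Ω → ℝ) (hU : Measurable U) (hUrange : ∀ ω, U ω ∈ Icc (0:ℝ) 1)
    (hUnif : ∀ t ∈ Icc (0:ℝ) 1,
      (μ ({ω | U ω ≤ t} ∩ Dᶜ)).toReal = t * (μ Dᶜ).toReal)
    (G : ℝ → ℝ) (hG : Measurable G)
    (hmodel : μ[D.indicator (fun _ => (1:ℝ)) | MeasurableSpace.comap U Real.measurableSpace]
      =ᵐ[μ] fun ω => expit (logit (μ D).toReal + G (U ω)))
    (ROC : ℝ → ℝ)
    (hROC : ∀ t, ROC t = (μ ({ω | U ω ≤ t} ∩ D)).toReal / (μ D).toReal) :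
    (∀ t ∈ Icc (0:ℝ) 1, ROC t = ∫ u in (0:ℝ)..t, Real.exp (G u))
      ∧ (∫ u in (0:ℝ)..(1:ℝ), Real.exp (G u)) = 1
      ∧ (Continuous G → ∀ t ∈ Ioo (0:ℝ) 1,
          HasDerivAt ROC (Real.exp (G t)) t ∧ G t = Real.log (Real.exp (G t))) := by
  set ρ := (μ D).toReal
  have hcontrol : (μ.restrict Dᶜ).map U = μ Dᶜ • volume.restrict (Icc 0 1) :=
    map_restrict_eq_smul_volume_restrict_Icc hU hUrange hUnif
  have hcase (t : ℝ) (ht : t ∈ Icc (0 : ℝ) 1) :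
      (μ ({ω | U ω ≤ t} ∩ D)).toReal
        = (μ Dᶜ).toReal * ∫ u in (0 : ℝ)..t, exp (logit ρ + G u) := by
    change (μ (U ⁻¹' Iic t ∩ D)).toReal = _
    rw [← Measure.restrict_apply (hU measurableSet_Iic), ← Measure.map_apply hU measurableSet_Iic,
      map_restrict_eq_withDensity_exp_of_condExp_eq_expit hU hD hG _ hmodel, hcontrol,
      withDensity_smul_measure, Measure.smul_apply, smul_eq_mul, ENNReal.toReal_mul,
      toReal_withDensity_volume_restrict_Icc_Iic (f := fun u => exp (logit ρ + G u))
        (measurable_const.add hG).exp (fun u => (exp_pos _).le) ht]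
  have hρc : (μ Dᶜ).toReal = 1 - ρ := probReal_compl_eq_one_sub hD
  have hROC_eq (t : ℝ) (ht : t ∈ Icc (0 : ℝ) 1) : ROC t = ∫ u in (0 : ℝ)..t, exp (G u) := by
    simp_rw [hROC, hcase t ht, hρc, exp_add, exp_logit hρ0 hρ1, intervalIntegral.integral_const_mul]
    field_simp [(sub_pos.2 hρ1).ne']
  have hROC_one : ROC 1 = 1 := by
    have huniv : {ω | U ω ≤ 1} = univ := eq_univ_of_forall fun ω => (hUrange ω).2
    rw [hROC, huniv, univ_inter, div_self hρ0.ne']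
  refine ⟨hROC_eq, by rw [← hROC_eq 1 ⟨zero_le_one, le_rfl⟩, hROC_one],
    fun hGc t ht => ⟨?_, (log_exp _).symm⟩⟩
  exact ((continuous_exp.comp hGc).integral_hasStrictDerivAt 0 t).hasDerivAt.congr_of_eventuallyEq
    (Filter.eventually_of_mem (isOpen_Ioo.mem_nhds ht) fun s hs => hROC_eq s (Ioo_subset_Icc_self hs))
end

section
/- Case placement values are distributed as the ROC curve. Let Y : Ω → ℝ be a marker with control survival function S̄(y) = P(Y > y | D = 0) and case survival function S_D(y) = P(Y > y | D = 1). Assume S̄ is continuous and strictly decreasing with range (0,1) as y ranges over ℝ, and assume the conditional distribution of Y given D = 1 has no atoms. Then for every t ∈ (0,1), P(S̄(Y) ≤ t | D = 1) = S_D(S̄⁻¹(t)); that is, the conditional CDF of the placement value U = S̄(Y) among cases equals the ROC curve ROC(t) = S_D(S̄⁻¹(t)). -/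
open MeasureTheory Real Set

/-! Since `S̄` is strictly decreasing, `S̄(Y) ≤ t = S̄(S̄⁻¹ t)` exactly when `Y ≥ S̄⁻¹ t`.
Among cases the level set `{Y = S̄⁻¹ t}` is null, so `{Y ≥ S̄⁻¹ t}` and `{Y > S̄⁻¹ t}` have the
same case probability `S_D(S̄⁻¹ t)`. -/

theorem StrictAnti.setOf_comp_le_eq {Ω α β : Type*} [LinearOrder α] [Preorder β] {f : α → β}
    (hf : StrictAnti f) (Y : Ω → α) (x : α) : {ω | f (Y ω) ≤ f x} = {ω | x ≤ Y ω} := by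
  ext
  exact hf.le_iff_ge

theorem measure_setOf_le_inter_eq_gt {Ω α : Type*} [MeasurableSpace Ω] [LinearOrder α]
    (μ : Measure Ω) {Y : Ω → α} {D : Set Ω} {y : α} (hatom : μ ({ω | Y ω = y} ∩ D) = 0) :
    μ ({ω | y ≤ Y ω} ∩ D) = μ ({ω | Y ω > y} ∩ D) := by
  have hsplit : {ω | y ≤ Y ω} ∩ D = ({ω | Y ω > y} ∩ D) ∪ ({ω | Y ω = y} ∩ D) := by
    ext ω
    simp only [mem_inter_iff, mem_ofPred_eq, mem_union, le_iff_lt_or_eq, eq_comm (a := y)]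
    tauto
  rw [hsplit]
  refine le_antisymm ?_ (measure_mono subset_union_left)
  calc μ (({ω | Y ω > y} ∩ D) ∪ ({ω | Y ω = y} ∩ D))
      ≤ μ ({ω | Y ω > y} ∩ D) + μ ({ω | Y ω = y} ∩ D) := measure_union_le _ _
    _ = μ ({ω | Y ω > y} ∩ D) := by rw [hatom, add_zero]

theorem case_placement_values_distributed_as_roc_general
    {Ω : Type*} [MeasurableSpace Ω] (μ : Measure Ω)
    (D : Set Ω)
    (Y : Ω → ℝ)
    (Sbar SD : ℝ → ℝ)
    (hSD : ∀ y, SD y = (μ ({ω | Y ω > y} ∩ D)).toReal / (μ D).toReal)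
    (hanti : StrictAnti Sbar)
    (hnoatom : ∀ y : ℝ, μ ({ω | Y ω = y} ∩ D) = 0)
    (Sinv : ℝ → ℝ) (hSinv : ∀ t ∈ Ioo (0:ℝ) 1, Sbar (Sinv t) = t) :
    ∀ t ∈ Ioo (0:ℝ) 1,
      (μ ({ω | Sbar (Y ω) ≤ t} ∩ D)).toReal / (μ D).toReal = SD (Sinv t) := by
  intro t ht
  have hlevel := hanti.setOf_comp_le_eq Y (Sinv t)
  rw [hSinv t ht] at hlevel
  rw [hlevel, measure_setOf_le_inter_eq_gt μ (hnoatom _), hSD]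

/-- Case placement values are distributed as the ROC curve: if the control survival
function `S̄` of the marker `Y` is continuous, strictly decreasing with range `(0,1)`
(with inverse `Sinv`), and the case distribution of `Y` has no atoms, then the conditional
CDF of the placement value `U = S̄(Y)` among cases at `t` equals `ROC(t) = S_D(S̄⁻¹(t))`. -/
theorem case_placement_values_distributed_as_roc
    {Ω : Type*} [MeasurableSpace Ω] (μ : Measure Ω) [IsProbabilityMeasure μ]
    (D : Set Ω) (hD : MeasurableSet D)
    (hD1 : 0 < μ D) (hD0 : μ D < 1)
    (Y : Ω → ℝ) (hY : Measurable Y)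
    (Sbar SD : ℝ → ℝ)
    (hSbar : ∀ y, Sbar y = (μ ({ω | Y ω > y} ∩ Dᶜ)).toReal / (μ Dᶜ).toReal)
    (hSD : ∀ y, SD y = (μ ({ω | Y ω > y} ∩ D)).toReal / (μ D).toReal)
    (hcont : Continuous Sbar) (hanti : StrictAnti Sbar)
    (hrange : ∀ t ∈ Ioo (0:ℝ) 1, ∃ y, Sbar y = t)
    (hnoatom : ∀ y : ℝ, μ ({ω | Y ω = y} ∩ D) = 0)
    (Sinv : ℝ → ℝ) (hSinv : ∀ t ∈ Ioo (0:ℝ) 1, Sbar (Sinv t) = t) :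
    ∀ t ∈ Ioo (0:ℝ) 1,
      (μ ({ω | Sbar (Y ω) ≤ t} ∩ D)).toReal / (μ D).toReal = SD (Sinv t) :=
  case_placement_values_distributed_as_roc_general μ D Y Sbar SD hSD hanti hnoatom Sinv hSinv
end

section
/- A monotone likelihood ratio implies a concave ROC curve (Section 2.2). Let f₀, f₁ : ℝ → ℝ be probability density functions (nonnegative, Lebesgue integrable with total integral 1) with f₀(y) > 0 for all y, and suppose the likelihood ratio y ↦ f₁(y)/f₀(y) is nondecreasing. Define S̄(y) = ∫_y^∞ f₀(s) ds and S_D(y) = ∫_y^∞ f₁(s) ds, so that S̄ is continuous and strictly decreasing with range (0,1) and has inverse S̄⁻¹ : (0,1) → ℝ. Then the ROC curve ROC(t) = S_D(S̄⁻¹(t)) is concave on (0,1). -/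
open MeasureTheory Real Set

/-- A monotone likelihood ratio implies a concave ROC curve: if `f₀, f₁` are probability
densities with `f₀ > 0` everywhere and nondecreasing likelihood ratio `f₁/f₀`, and
`S̄(y) = ∫_y^∞ f₀`, `S_D(y) = ∫_y^∞ f₁` with `S̄⁻¹ = Sinv` the inverse of `S̄` on `(0,1)`,
then the ROC curve `t ↦ S_D(S̄⁻¹(t))` is concave on `(0,1)`. -/
theorem concave_roc_of_monotone_likelihood_ratio
    (f0 f1 : ℝ → ℝ)
    (hf0pos : ∀ y, 0 < f0 y) (hf1nonneg : ∀ y, 0 ≤ f1 y)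
    (hf0int : Integrable f0) (hf1int : Integrable f1)
    (hf0tot : ∫ y, f0 y = 1) (hf1tot : ∫ y, f1 y = 1)
    (hmlr : Monotone fun y => f1 y / f0 y)
    (Sbar SD : ℝ → ℝ)
    (hSbar : ∀ y, Sbar y = ∫ s in Ioi y, f0 s)
    (hSD : ∀ y, SD y = ∫ s in Ioi y, f1 s)
    (Sinv : ℝ → ℝ)
    (hSinv : ∀ t ∈ Ioo (0:ℝ) 1, Sbar (Sinv t) = t) :
    ConcaveOn ℝ (Ioo (0:ℝ) 1) (fun t => SD (Sinv t)) := by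
  -- splitting lemma
  have split : ∀ (g : ℝ → ℝ), Integrable g → ∀ a b : ℝ, a ≤ b →
      (∫ s in Ioi a, g s) = (∫ s in Ioc a b, g s) + ∫ s in Ioi b, g s := by
    intro g hg a b h
    rw [← Ioc_union_Ioi_eq_Ioi h, setIntegral_union Ioc_disjoint_Ioi_same measurableSet_Ioi
      hg.integrableOn hg.integrableOn]
  -- supporting line inequality
  have key : ∀ y m : ℝ, SD y - SD m ≤ (f1 m / f0 m) * (Sbar y - Sbar m) := by
    intro y m
    set c := f1 m / f0 m with hc
    rcases le_total y m with h | h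
    · have h1 : SD y - SD m = ∫ s in Ioc y m, f1 s := by
        rw [hSD y, hSD m, split f1 hf1int y m h]; ring
      have h0 : Sbar y - Sbar m = ∫ s in Ioc y m, f0 s := by
        rw [hSbar y, hSbar m, split f0 hf0int y m h]; ring
      rw [h1, h0, ← integral_const_mul]
      apply setIntegral_mono_on hf1int.integrableOn
        (hf0int.integrableOn.const_mul c) measurableSet_Ioc
      intro s hs
      have hlr : f1 s / f0 s ≤ c := hmlr hs.2
      have := mul_le_mul_of_nonneg_right hlr (hf0pos s).le
      rwa [div_mul_cancel₀ _ (hf0pos s).ne'] at this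
    · have h1 : SD m - SD y = ∫ s in Ioc m y, f1 s := by
        rw [hSD y, hSD m, split f1 hf1int m y h]; ring
      have h0 : Sbar m - Sbar y = ∫ s in Ioc m y, f0 s := by
        rw [hSbar y, hSbar m, split f0 hf0int m y h]; ring
      have : c * (Sbar m - Sbar y) ≤ SD m - SD y := by
        rw [h1, h0, ← integral_const_mul]
        apply setIntegral_mono_on (hf0int.integrableOn.const_mul c)
          hf1int.integrableOn measurableSet_Ioc
        intro s hs
        have hlr : c ≤ f1 s / f0 s := hmlr hs.1.le
        have := mul_le_mul_of_nonneg_right hlr (hf0pos s).le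
        rwa [div_mul_cancel₀ _ (hf0pos s).ne'] at this
      linarith
  refine ⟨convex_Ioo 0 1, ?_⟩
  intro x hx z hz a b ha hb hab
  simp only [smul_eq_mul]
  have hs : a * x + b * z ∈ Ioo (0:ℝ) 1 := by
    have := (convex_Ioo (0:ℝ) 1) hx hz ha hb hab
    simpa using this
  set m := Sinv (a * x + b * z) with hmdef
  have hcnn : 0 ≤ f1 m / f0 m := div_nonneg (hf1nonneg m) (hf0pos m).le
  have k1 := key (Sinv x) m
  have k2 := key (Sinv z) m
  rw [hSinv x hx] at k1
  rw [hSinv z hz] at k2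
  have hm : Sbar m = a * x + b * z := hSinv _ hs
  rw [hm] at k1 k2
  have e1 := mul_le_mul_of_nonneg_left k1 ha
  have e2 := mul_le_mul_of_nonneg_left k2 hb
  have hb1 : b = 1 - a := by linarith
  subst hb1
  nlinarith [e1, e2]
end

section
/- Case–control sampling preserves the diagnostic likelihood ratio (Section 2.4). Let (Ω, 𝓕, P) be a probability space, D : Ω → {0,1} measurable, and let A, V, W ∈ 𝓕 be events (A is the sampling event, V plays the role of {U = u, X = x}, W the role of {X = x}). Suppose that for each d ∈ {0,1}: P(A ∩ V ∩ {D = d}) · P({D = d}) = P(A ∩ {D = d}) · P(V ∩ {D = d}) and P(A ∩ W ∩ {D = d}) · P({D = d}) = P(A ∩ {D = d}) · P(W ∩ {D = d}) (i.e., A is conditionally independent of V and of W given D), and that P(V ∩ A ∩ {D = 0}), P(W ∩ A ∩ {D = 1}), P(V ∩ {D = 0}), P(W ∩ {D = 1}), P({D = 0}) and P({D = 1}) are all positive. Then [P(D = 1 | V ∩ A)/P(D = 0 | V ∩ A)] · [P(D = 0 | W ∩ A)/P(D = 1 | W ∩ A)] = [P(D = 1 | V)/P(D = 0 | V)] ·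 [P(D = 0 | W)/P(D = 1 | W)]. -/
/-!
Conditional independence of `A` and `V` given `D` says
`P(A ∩ V ∩ {D = d}) = P(A | D = d) · P(V ∩ {D = d})`. Hence the within-sample odds
`P(D = 1 | V ∩ A) / P(D = 0 | V ∩ A)` are the population odds times the factor
`P(A | D = 1) / P(A | D = 0)`, and likewise for `W`; this common factor cancels in the ratio.
-/

open MeasureTheory Set

theorem mul_div_mul_mul_mul_div_mul_cancel₀ {K : Type*} [Field K] {p q : K}
    (hp : p ≠ 0) (hq : q ≠ 0) (a b c d : K) :
    p * a / (q * b) * (q * c / (p * d)) = a / b * (c / d) := by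
  rw [mul_div_mul_comm, mul_div_mul_comm, mul_mul_mul_comm, div_mul_div_cancel₀ hq,
    div_self hp, one_mul]

section

variable {Ω : Type*} [MeasurableSpace Ω] {μ : Measure Ω} [IsFiniteMeasure μ]

/-- If `μ F = 0`, both sides vanish through `x / 0 = 0`. -/
theorem measureReal_inter_div_div_measureReal_inter_div (E E' F : Set Ω) :
    μ.real (E ∩ F) / μ.real F / (μ.real (E' ∩ F) / μ.real F) =
      μ.real (E ∩ F) / μ.real (E' ∩ F) := by
  rcases eq_or_ne (μ.real F) 0 with hF | hF
  · have hEF : μ.real (E ∩ F) = 0 :=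
      le_antisymm (hF ▸ measureReal_mono inter_subset_right) measureReal_nonneg
    simp [hF, hEF]
  · exact div_div_div_cancel_right₀ hF _ _

theorem measureReal_inter_inter_eq_div_mul {A V D : Set Ω}
    (hAV : μ (A ∩ V ∩ D) * μ D = μ (A ∩ D) * μ (V ∩ D)) (hD : μ D ≠ 0) :
    μ.real (A ∩ V ∩ D) = μ.real (A ∩ D) / μ.real D * μ.real (V ∩ D) := by
  have hD' : μ.real D ≠ 0 := (measureReal_ne_zero_iff (measure_ne_top μ D)).2 hD
  have hreal := congrArg ENNReal.toReal hAV
  simp only [ENNReal.toReal_mul, ← measureReal_def] at hreal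
  field_simp
  exact hreal

end

theorem case_control_preserves_dlr_general
    {Ω : Type*} [MeasurableSpace Ω] (μ : Measure Ω) [IsProbabilityMeasure μ]
    (A V W D : Set Ω)
    (hV1 : μ (A ∩ V ∩ D) * μ D = μ (A ∩ D) * μ (V ∩ D))
    (hV0 : μ (A ∩ V ∩ Dᶜ) * μ Dᶜ = μ (A ∩ Dᶜ) * μ (V ∩ Dᶜ))
    (hW1 : μ (A ∩ W ∩ D) * μ D = μ (A ∩ D) * μ (W ∩ D))
    (hW0 : μ (A ∩ W ∩ Dᶜ) * μ Dᶜ = μ (A ∩ Dᶜ) * μ (W ∩ Dᶜ))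
    (hVA0 : 0 < μ (V ∩ A ∩ Dᶜ)) (hWA1 : 0 < μ (W ∩ A ∩ D))
    (cp : Set Ω → Set Ω → ℝ)
    (hcp : ∀ E F : Set Ω, cp E F = (μ (E ∩ F)).toReal / (μ F).toReal) :
    (cp D (V ∩ A) / cp Dᶜ (V ∩ A)) * (cp Dᶜ (W ∩ A) / cp D (W ∩ A)) =
      (cp D V / cp Dᶜ V) * (cp Dᶜ W / cp D W) := by
  have hAD1 : μ (A ∩ D) ≠ 0 := fun h =>
    hWA1.ne' (measure_mono_null (inter_subset_inter_left _ inter_subset_right) h)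
  have hAD0 : μ (A ∩ Dᶜ) ≠ 0 := fun h =>
    hVA0.ne' (measure_mono_null (inter_subset_inter_left _ inter_subset_right) h)
  have hD1 : μ D ≠ 0 := fun h => hAD1 (measure_mono_null inter_subset_right h)
  have hD0 : μ Dᶜ ≠ 0 := fun h => hAD0 (measure_mono_null inter_subset_right h)
  have hreal : ∀ S : Set Ω, μ S ≠ 0 → μ.real S ≠ 0 := fun S =>
    (measureReal_ne_zero_iff (measure_ne_top μ S)).2
  have hsample1 : μ.real (A ∩ D) / μ.real D ≠ 0 := div_ne_zero (hreal _ hAD1) (hreal _ hD1)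
  have hsample0 : μ.real (A ∩ Dᶜ) / μ.real Dᶜ ≠ 0 := div_ne_zero (hreal _ hAD0) (hreal _ hD0)
  simp only [hcp, ← measureReal_def, measureReal_inter_div_div_measureReal_inter_div]
  simp only [inter_comm D, inter_comm Dᶜ, inter_comm V A, inter_comm W A]
  rw [measureReal_inter_inter_eq_div_mul hV1 hD1, measureReal_inter_inter_eq_div_mul hV0 hD0,
    measureReal_inter_inter_eq_div_mul hW1 hD1, measureReal_inter_inter_eq_div_mul hW0 hD0]
  exact mul_div_mul_mul_mul_div_mul_cancel₀ hsample1 hsample0 _ _ _ _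

/-- Case–control sampling preserves the diagnostic likelihood ratio: if the sampling event
`A` is conditionally independent of `V` (playing the role of `{U = u, X = x}`) and of `W`
(playing the role of `{X = x}`) given disease status, then the odds-ratio-type quantity
`[P(D=1|V∩A)/P(D=0|V∩A)]·[P(D=0|W∩A)/P(D=1|W∩A)]` is unchanged by conditioning on `A`. -/
theorem case_control_preserves_dlr
    {Ω : Type*} [MeasurableSpace Ω] (μ : Measure Ω) [IsProbabilityMeasure μ]
    (A V W D : Set Ω)
    (hV1 : μ (A ∩ V ∩ D) * μ D = μ (A ∩ D) * μ (V ∩ D))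
    (hV0 : μ (A ∩ V ∩ Dᶜ) * μ Dᶜ = μ (A ∩ Dᶜ) * μ (V ∩ Dᶜ))
    (hW1 : μ (A ∩ W ∩ D) * μ D = μ (A ∩ D) * μ (W ∩ D))
    (hW0 : μ (A ∩ W ∩ Dᶜ) * μ Dᶜ = μ (A ∩ Dᶜ) * μ (W ∩ Dᶜ))
    (hVA0 : 0 < μ (V ∩ A ∩ Dᶜ)) (hWA1 : 0 < μ (W ∩ A ∩ D))
    (hVD0 : 0 < μ (V ∩ Dᶜ)) (hWD1 : 0 < μ (W ∩ D))
    (hD1 : 0 < μ D) (hD0 : 0 < μ Dᶜ)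
    (cp : Set Ω → Set Ω → ℝ)
    (hcp : ∀ E F : Set Ω, cp E F = (μ (E ∩ F)).toReal / (μ F).toReal) :
    (cp D (V ∩ A) / cp Dᶜ (V ∩ A)) * (cp Dᶜ (W ∩ A) / cp D (W ∩ A)) =
      (cp D V / cp Dᶜ V) * (cp Dᶜ W / cp D W) :=
  case_control_preserves_dlr_general μ A V W D hV1 hV0 hW1 hW0 hVA0 hWA1 cp hcp
end

section
/- The closed-form weights maximize the empirical likelihood subject to the constraints (Section 3.2). Let n_D and n_D̄ be positive integers, n = n_D + n_D̄, and a₁, …, a_n positive reals. Define p_i = 1/(n_D̄ + n_D·a_i) and suppose ∑_{i=1}^n p_i = 1. Then for every q₁, …, q_n with q_i > 0, ∑_{i=1}^n q_i = 1 and ∑_{i=1}^n a_i·q_i = 1, one has ∑_{i=1}^n log q_i ≤ ∑_{i=1}^n log p_i. -/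
/-- The closed-form weights maximize the empirical likelihood subject to the constraints:
if `p_i = 1/(n_D̄ + n_D·a_i)` with `∑ p_i = 1`, then for any positive weights `q` with
`∑ q_i = 1` and `∑ a_i·q_i = 1` one has `∑ log q_i ≤ ∑ log p_i`. -/
theorem closed_form_weights_maximize_empirical_likelihood
    (nD nDbar : ℕ) (hnD : 0 < nD) (hnDbar : 0 < nDbar)
    (a : Fin (nD + nDbar) → ℝ) (ha : ∀ i, 0 < a i)
    (p : Fin (nD + nDbar) → ℝ)
    (hp : ∀ i, p i = 1 / ((nDbar : ℝ) + (nD : ℝ) * a i))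
    (hpsum : (∑ i, p i) = 1) :
    ∀ q : Fin (nD + nDbar) → ℝ, (∀ i, 0 < q i) → (∑ i, q i) = 1 →
      (∑ i, a i * q i) = 1 →
      (∑ i, Real.log (q i)) ≤ ∑ i, Real.log (p i) := by
  intro q hq hqsum haq
  have hd : ∀ i, (0:ℝ) < (nDbar : ℝ) + (nD : ℝ) * a i := by
    intro i
    exact add_pos_of_nonneg_of_pos (Nat.cast_nonneg _)
      (mul_pos (by exact_mod_cast hnD) (ha i))
  have hppos : ∀ i, 0 < p i := by
    intro i; rw [hp i]; exact div_pos one_pos (hd i)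
  -- key: ∑ (log q_i - log p_i) ≤ ∑ (q_i/p_i - 1) = 0
  have key : ∀ i : Fin (nD + nDbar),
      Real.log (q i) - Real.log (p i) ≤ q i / p i - 1 := by
    intro i
    have hx : 0 < q i / p i := div_pos (hq i) (hppos i)
    have := Real.log_le_sub_one_of_pos hx
    rwa [Real.log_div (hq i).ne' (hppos i).ne'] at this
  have hsum : ∑ i, (Real.log (q i) - Real.log (p i)) ≤
      ∑ i, (q i / p i - 1) := Finset.sum_le_sum fun i _ => key i
  have hratio : ∀ i : Fin (nD + nDbar),
      q i / p i = (nDbar : ℝ) * q i + (nD : ℝ) * (a i * q i) := by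
    intro i
    rw [hp i]
    field_simp [(hd i).ne']
  have hzero : ∑ i, (q i / p i - 1) = 0 := by
    rw [Finset.sum_sub_distrib]
    have : ∑ i, q i / p i = (nDbar : ℝ) * (∑ i, q i) + (nD : ℝ) * (∑ i, a i * q i) := by
      rw [Finset.mul_sum, Finset.mul_sum, ← Finset.sum_add_distrib]
      exact Finset.sum_congr rfl fun i _ => hratio i
    rw [this, hqsum, haq]
    simp [Finset.card_univ]
    push_cast
    ring
  have := hsum.trans_eq hzero
  rw [Finset.sum_sub_distrib] at this
  linarith
end
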